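/- Define α ⪯ β (α is weaker than β) for ordinals α, β < ω^ω to mean every Cantor coefficient of α is at most the corresponding Cantor coefficient of β. Then α ⪯ β if and only if there exists an ordinal γ with α ⨣ γ = β. -/

import Mathlib

/-!
Below `ω ^ ω` every ordinal is `cnf d a` for some `d` and coefficients `a`, and the natural sum of
two such ordinals is computed coefficientwise: `cnf d a ♯ cnf d b = cnf d (a + b)`. Given this,
`γ := cnf d (b - a)` witnesses `α ♯ γ = β` when `a ≤ b`, and conversely `α ♯ γ = β` exhibits the
coefficients of `β` as those of `α` plus those of `γ`.

The coefficientwise formula is proved one leading term at a time: if `P` is closed under `♯` and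
`x, y < P`, then `(P * m + x) ♯ (P * n + y) = P * (m + n) + (x ♯ y)`, and `ω ^ (d + 1)` is closed
under `♯` by the formula in degree `d`.
-/

universe u

namespace Ordinal

/-- Natural (Hessenberg) addition on ordinals, as formerly in Mathlib
(`Mathlib.SetTheory.Ordinal.NaturalOps`, since removed). -/
noncomputable def nadd (a b : Ordinal.{u}) : Ordinal.{u} :=
  max (blsub.{u, u} a fun a' _ => nadd a' b) (blsub.{u, u} b fun b' _ => nadd a b')
termination_by (a, b)

end Ordinal

namespace NaturalOps

scoped infixl:65 " ♯ " => Ordinal.nadd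

end NaturalOps

open Ordinal NaturalOps

/-- The ordinal `ω^d * a_d + ... + ω * a_1 + a_0`, i.e. the ordinal below `ω^ω` with
Cantor normal form given by the natural-number coefficients `a 0, ..., a d`. -/
noncomputable def cnf (d : ℕ) (a : ℕ → ℕ) : Ordinal :=
  ((List.range (d + 1)).reverse.map (fun i => ω ^ i * (a i : Ordinal))).sum

/-- `α` is weaker than `β`: every Cantor coefficient of `α` is at most the
corresponding Cantor coefficient of `β`. -/
def Weaker (α β : Ordinal) : Prop :=
  ∃ (d : ℕ) (a b : ℕ → ℕ), α = cnf d a ∧ β = cnf d b ∧ ∀ i, a i ≤ b i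

namespace Ordinal

theorem lt_nadd_iff {a b c : Ordinal.{u}} :
    a < b ♯ c ↔ (∃ b' < b, a ≤ b' ♯ c) ∨ ∃ c' < c, a ≤ b ♯ c' := by
  rw [nadd]
  simp [lt_blsub_iff]

theorem nadd_le_iff {a b c : Ordinal.{u}} :
    b ♯ c ≤ a ↔ (∀ b' < b, b' ♯ c < a) ∧ ∀ c' < c, b ♯ c' < a := by
  rw [nadd]
  simp [blsub_le_iff]

theorem nadd_lt_nadd_left {b c : Ordinal.{u}} (h : b < c) (a : Ordinal.{u}) : a ♯ b < a ♯ c :=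
  lt_nadd_iff.2 (Or.inr ⟨b, h, le_rfl⟩)

theorem nadd_lt_nadd_right {b c : Ordinal.{u}} (h : b < c) (a : Ordinal.{u}) : b ♯ a < c ♯ a :=
  lt_nadd_iff.2 (Or.inl ⟨b, h, le_rfl⟩)

theorem nadd_le_nadd_left {b c : Ordinal.{u}} (h : b ≤ c) (a : Ordinal.{u}) : a ♯ b ≤ a ♯ c :=
  StrictMono.monotone (fun _ _ h => nadd_lt_nadd_left h a) h

theorem nadd_zero (a : Ordinal.{u}) : a ♯ 0 = a := by
  induction a using WellFoundedLT.induction with | _ a IH =>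
  refine le_antisymm (nadd_le_iff.2 ⟨fun a' h => (IH a' h).trans_lt h, fun _ h => ?_⟩) ?_
  · exact (not_lt_zero h).elim
  · exact le_of_forall_lt fun a' h => (IH a' h).symm.trans_lt (nadd_lt_nadd_right h 0)

theorem le_self_nadd (a b : Ordinal.{u}) : a ≤ a ♯ b :=
  (nadd_zero a).symm.trans_le (nadd_le_nadd_left zero_le a)

theorem lt_add_cases {a b w : Ordinal} (h : w < a + b) : w < a ∨ ∃ r < b, w = a + r := by
  refine (lt_or_ge w a).imp_right fun hw => ⟨w - a, ?_, (Ordinal.add_sub_cancel_of_le hw).symm⟩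
  rwa [← add_lt_add_iff_left a, Ordinal.add_sub_cancel_of_le hw]

theorem add_le_nadd (a b : Ordinal.{u}) : a + b ≤ a ♯ b := by
  induction b using WellFoundedLT.induction with | _ b IH =>
  refine le_of_forall_lt fun w hw => ?_
  rcases lt_add_cases hw with hw | ⟨r, hr, rfl⟩
  · exact hw.trans_le (le_self_nadd a b)
  · exact (IH r hr).trans_lt (nadd_lt_nadd_left hr a)

theorem lt_mul_natCast_add_cases {P x u : Ordinal} {m : ℕ} (hu : u < P * m + x) :
    (∃ k < m, ∃ r < P, u = P * k + r) ∨ ∃ r < x, u = P * m + r := by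
  refine (lt_add_cases hu).imp_left fun hu => ?_
  obtain ⟨q, hq, r, hr, rfl⟩ := lt_mul_iff.1 hu
  obtain ⟨k, rfl⟩ := lt_omega0.1 (hq.trans (natCast_lt_omega0 m))
  exact ⟨k, by exact_mod_cast hq, r, hr, rfl⟩

theorem mul_natCast_add_lt_mul_natCast {P s : Ordinal} {k M : ℕ} (hs : s < P) (hk : k < M) :
    P * k + s < P * M :=
  calc P * k + s < P * k + P := (add_lt_add_iff_left _).2 hs
    _ = P * (k + 1 : ℕ) := by push_cast; rw [mul_add_one]
    _ ≤ P * M := by gcongr; exact_mod_cast hk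

-- `♯` and `+` share precedence 65, so `a + x ♯ y` would parse as `(a + x) ♯ y`.
theorem le_mul_natCast_add_nadd_mul_natCast_add (P x y : Ordinal) (m n : ℕ) :
    P * (m + n : ℕ) + (x ♯ y) ≤ (P * m + x) ♯ (P * n + y) := by
  induction x using WellFoundedLT.induction generalizing y with | _ x IHx =>
  induction y using WellFoundedLT.induction with | _ y IHy =>
  refine le_of_forall_lt fun w hw => ?_
  rcases lt_mul_natCast_add_cases hw with ⟨k, hk, r, hr, rfl⟩ | ⟨r, hr, rfl⟩
  · calc P * k + r < P * (m + n : ℕ) := mul_natCast_add_lt_mul_natCast hr hk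
      _ = P * m + P * n := by push_cast; rw [mul_add]
      _ ≤ (P * m + x) + (P * n + y) := add_le_add le_self_add le_self_add
      _ ≤ _ := add_le_nadd _ _
  · rcases lt_nadd_iff.1 hr with ⟨x', hx', hr⟩ | ⟨y', hy', hr⟩
    · calc P * (m + n : ℕ) + r ≤ P * (m + n : ℕ) + (x' ♯ y) := by gcongr
        _ ≤ (P * m + x') ♯ (P * n + y) := IHx x' hx' y
        _ < _ := nadd_lt_nadd_right ((add_lt_add_iff_left _).2 hx') _
    · calc P * (m + n : ℕ) + r ≤ P * (m + n : ℕ) + (x ♯ y') := by gcongr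
        _ ≤ (P * m + x) ♯ (P * n + y') := IHy y' hy'
        _ < _ := nadd_lt_nadd_left ((add_lt_add_iff_left _).2 hy') _

theorem mul_natCast_add_nadd_mul_natCast_add_le {P x y : Ordinal}
    (hP : ∀ x < P, ∀ y < P, x ♯ y < P) (hx : x < P) (hy : y < P) (m n : ℕ) :
    (P * m + x) ♯ (P * n + y) ≤ P * (m + n : ℕ) + (x ♯ y) := by
  suffices H : ∀ u v, ∀ {m n : ℕ} {x y : Ordinal}, x < P → y < P → u = P * m + x →
      v = P * n + y → u ♯ v ≤ P * (m + n : ℕ) + (x ♯ y) from H _ _ hx hy rfl rfl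
  intro u
  induction u using WellFoundedLT.induction with | _ u IHu =>
  intro v
  induction v using WellFoundedLT.induction with | _ v IHv =>
  rintro m n x y hx hy rfl rfl
  refine nadd_le_iff.2 ⟨fun u hu => ?_, fun v hv => ?_⟩
  · rcases lt_mul_natCast_add_cases hu with ⟨k, hk, r, hr, rfl⟩ | ⟨r, hr, rfl⟩
    · calc (P * k + r) ♯ (P * n + y) ≤ P * (k + n : ℕ) + (r ♯ y) := IHu _ hu _ hr hy rfl rfl
        _ < _ := (mul_natCast_add_lt_mul_natCast (hP r hr y hy) (by omega)).trans_le le_self_add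
    · calc (P * m + r) ♯ (P * n + y) ≤ P * (m + n : ℕ) + (r ♯ y) :=
            IHu _ hu _ (hr.trans hx) hy rfl rfl
        _ < _ := (add_lt_add_iff_left _).2 (nadd_lt_nadd_right hr y)
  · rcases lt_mul_natCast_add_cases hv with ⟨k, hk, r, hr, rfl⟩ | ⟨r, hr, rfl⟩
    · calc (P * m + x) ♯ (P * k + r) ≤ P * (m + k : ℕ) + (x ♯ r) := IHv _ hv hx hr rfl rfl
        _ < _ := (mul_natCast_add_lt_mul_natCast (hP x hx r hr) (by omega)).trans_le le_self_add
    · calc (P * m + x) ♯ (P * n + r) ≤ P * (m + n : ℕ) + (x ♯ r) :=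
            IHv _ hv hx (hr.trans hy) rfl rfl
        _ < _ := (add_lt_add_iff_left _).2 (nadd_lt_nadd_left hr x)

theorem mul_natCast_add_nadd_mul_natCast_add {P x y : Ordinal}
    (hP : ∀ x < P, ∀ y < P, x ♯ y < P) (hx : x < P) (hy : y < P) (m n : ℕ) :
    (P * m + x) ♯ (P * n + y) = P * (m + n : ℕ) + (x ♯ y) :=
  (mul_natCast_add_nadd_mul_natCast_add_le hP hx hy m n).antisymm
    (le_mul_natCast_add_nadd_mul_natCast_add P x y m n)

theorem natCast_nadd_natCast (m n : ℕ) : (m : Ordinal) ♯ n = (m + n : ℕ) := by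
  have hP : ∀ x < (1 : Ordinal), ∀ y < 1, x ♯ y < 1 := by
    simp only [Order.lt_one_iff]
    rintro _ rfl _ rfl
    rw [nadd_zero]
  simpa [nadd_zero] using mul_natCast_add_nadd_mul_natCast_add hP zero_lt_one zero_lt_one m n

end Ordinal

theorem cnf_zero (a : ℕ → ℕ) : cnf 0 a = a 0 := by
  simp [cnf]

theorem cnf_succ (d : ℕ) (a : ℕ → ℕ) : cnf (d + 1) a = ω ^ (d + 1) * a (d + 1) + cnf d a := by
  simp [cnf, List.range_succ]

theorem cnf_congr {d : ℕ} {a b : ℕ → ℕ} (h : ∀ i ≤ d, a i = b i) : cnf d a = cnf d b := by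
  unfold cnf
  refine congrArg _ (List.map_congr_left fun i hi => ?_)
  rw [List.mem_reverse, List.mem_range] at hi
  rw [h i (Nat.lt_succ_iff.1 hi)]

theorem cnf_lt (d : ℕ) (a : ℕ → ℕ) : cnf d a < ω ^ (d + 1) := by
  induction d with
  | zero => simp [cnf_zero]
  | succ d IH =>
    rw [cnf_succ, pow_succ _ (d + 1)]
    exact lt_mul_iff.2 ⟨_, natCast_lt_omega0 _, _, IH, rfl⟩

theorem exists_cnf_eq {d : ℕ} {α : Ordinal} (h : α < ω ^ (d + 1)) : ∃ a, cnf d a = α := by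
  induction d generalizing α with
  | zero =>
    obtain ⟨n, rfl⟩ := lt_omega0.1 (by simpa using h)
    exact ⟨fun _ => n, cnf_zero _⟩
  | succ d IH =>
    rw [pow_succ _ (d + 1)] at h
    obtain ⟨q, hq, r, hr, rfl⟩ := lt_mul_iff.1 h
    obtain ⟨m, rfl⟩ := lt_omega0.1 hq
    obtain ⟨a, rfl⟩ := IH hr
    refine ⟨Function.update a (d + 1) m, ?_⟩
    rw [cnf_succ, Function.update_self]
    exact congrArg _ (cnf_congr fun i hi => Function.update_of_ne (by omega) _ _)

theorem cnf_nadd (d : ℕ) (a b : ℕ → ℕ) : cnf d a ♯ cnf d b = cnf d (a + b) := by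
  induction d generalizing a b with
  | zero => simp only [cnf_zero, natCast_nadd_natCast, Pi.add_apply]
  | succ d IH =>
    have hP : ∀ x < ω ^ (d + 1), ∀ y < ω ^ (d + 1), x ♯ y < ω ^ (d + 1) := by
      intro x hx y hy
      obtain ⟨a', rfl⟩ := exists_cnf_eq hx
      obtain ⟨b', rfl⟩ := exists_cnf_eq hy
      exact IH a' b' ▸ cnf_lt d (a' + b')
    simp only [cnf_succ, mul_natCast_add_nadd_mul_natCast_add hP (cnf_lt d a) (cnf_lt d b), IH,
      Pi.add_apply]

theorem exists_lt_omega0_pow_succ_of_lt_omega0_opow_omega0 {α : Ordinal} (h : α < ω ^ ω) :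
    ∃ d : ℕ, α < ω ^ (d + 1) := by
  obtain ⟨c, hc, n, hn⟩ := (lt_omega0_opow omega0_ne_zero).1 h
  obtain ⟨d, rfl⟩ := lt_omega0.1 hc
  refine ⟨d, hn.trans ?_⟩
  rw [← opow_natCast, Nat.cast_succ]
  exact opow_mul_lt_opow (natCast_lt_omega0 n) (Order.lt_add_one_iff.2 le_rfl)

theorem weaker_iff_exists_nadd_general (α β : Ordinal) (hβ : β < ω ^ ω) :
    Weaker α β ↔ ∃ γ : Ordinal, α ♯ γ = β := by
  constructor
  · rintro ⟨d, a, b, rfl, rfl, hab⟩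
    exact ⟨cnf d (b - a), by rw [cnf_nadd, add_tsub_cancel_of_le hab]⟩
  · rintro ⟨γ, rfl⟩
    obtain ⟨d, hd⟩ := exists_lt_omega0_pow_succ_of_lt_omega0_opow_omega0 hβ
    obtain ⟨a, rfl⟩ := exists_cnf_eq ((le_self_nadd α γ).trans_lt hd)
    obtain ⟨c, rfl⟩ := exists_cnf_eq ((le_add_self.trans (add_le_nadd _ γ)).trans_lt hd)
    exact ⟨d, a, a + c, rfl, cnf_nadd d a c, fun i => Nat.le_add_right _ _⟩

/-- For ordinals below `ω^ω`, `α` is weaker than `β` (coefficient-wise comparison of the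
Cantor normal forms) if and only if `β` is a natural sum of `α` and some ordinal. -/
theorem weaker_iff_exists_nadd (α β : Ordinal) (hα : α < ω ^ ω) (hβ : β < ω ^ ω) :
    Weaker α β ↔ ∃ γ : Ordinal, α ♯ γ = β :=
  weaker_iff_exists_nadd_general α β hβ
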